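/- For j ≥ 1, let ω = ω'·(10)^j be a binary word avoiding the factor (10)^j1 with endpoint at ordinate k ≥ 2. Then for all 1 ≤ h ≤ j and 2 ≤ m ≤ k, the word ω'·(10)^{h-1}·1·0^m·(10)^j avoids the factor (10)^j1. -/

import Mathlib

/-!
The pattern `(10)^j 1` contains no factor `00`, so an occurrence of it in
`ω' (10)^(h-1) 1 0^m (10)^j` with `m ≥ 2` cannot cover two of the inserted zeros. It therefore
lies either in `ω' (10)^(h-1) 1 0 = ω' (10)^h`, a prefix of `ω`, or in `0 (10)^j`, which has the
length of the pattern but starts with `0`.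
-/

/-- The pattern `(10)^j 1` (`true` = 1 / up step, `false` = 0 / down step). -/
def pat (j : ℕ) : List Bool := (List.replicate j [true, false]).flatten ++ [true]

/-- `(10)^j`. -/
def alt (j : ℕ) : List Bool := (List.replicate j [true, false]).flatten

def ht (w : List Bool) : ℤ := (w.count true : ℤ) - (w.count false : ℤ)

namespace List

variable {α : Type*} {a b : α} {p A B : List α}

theorem IsPrefix.prefix_append_singleton_of_not_infix (h : p <+: A ++ a :: b :: B)
    (hab : ¬ [a, b] <:+: p) : p <+: A ++ [a] := by
  induction A generalizing p with
  | nil =>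
    rcases prefix_cons_iff.1 h with rfl | ⟨q, rfl, hq⟩
    · exact nil_prefix
    rcases prefix_cons_iff.1 hq with rfl | ⟨r, rfl, -⟩
    · exact prefix_rfl
    · exact absurd (cons_prefix_cons.2 ⟨rfl, cons_prefix_cons.2 ⟨rfl, nil_prefix⟩⟩).isInfix hab
  | cons x A ih =>
    rcases prefix_cons_iff.1 h with rfl | ⟨q, rfl, hq⟩
    · exact nil_prefix
    · exact cons_prefix_cons.2 ⟨rfl, ih hq fun hq' => hab (hq'.trans (suffix_cons x q).isInfix)⟩

theorem IsInfix.infix_append_singleton_or_infix_cons (h : p <:+: A ++ a :: b :: B)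
    (hab : ¬ [a, b] <:+: p) : p <:+: A ++ [a] ∨ p <:+: b :: B := by
  induction A with
  | nil =>
    exact (infix_cons_iff.1 h).imp
      (fun h' => (h'.prefix_append_singleton_of_not_infix (A := []) hab).isInfix) id
  | cons x A ih =>
    rcases infix_cons_iff.1 h with h' | h'
    · exact .inl (h'.prefix_append_singleton_of_not_infix (A := x :: A) hab).isInfix
    · exact (ih h').imp_left infix_cons

theorem IsInfix.infix_append_singleton_or_infix_cons_of_replicate {n : ℕ}
    (h : p <:+: A ++ replicate (n + 2) a ++ B) (haa : ¬ [a, a] <:+: p) :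
    p <:+: A ++ [a] ∨ p <:+: a :: B := by
  induction n generalizing A with
  | zero => exact (append_assoc .. ▸ h).infix_append_singleton_or_infix_cons haa
  | succ n ih =>
    rw [append_assoc, replicate_succ, replicate_succ, cons_append, cons_append] at h
    refine (h.infix_append_singleton_or_infix_cons haa).imp_right fun hr => ?_
    rw [← cons_append, ← replicate_succ, ← nil_append (replicate _ _)] at hr
    exact (ih hr).elim (fun h₁ => h₁.trans (cons_prefix_cons.2 ⟨rfl, nil_prefix⟩).isInfix) id

end List

theorem pat_succ (j : ℕ) : pat (j + 1) = true :: false :: pat j := rfl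

theorem exists_pat_eq_true_cons (j : ℕ) : ∃ t, pat j = true :: t := by
  cases j <;> exact ⟨_, rfl⟩

theorem not_false_false_infix_pat (j : ℕ) : ¬ [false, false] <:+: pat j := by
  induction j with
  | zero => exact fun h => by simpa [pat] using h.length_le
  | succ j ih =>
    obtain ⟨t, ht⟩ := exists_pat_eq_true_cons j
    rw [pat_succ, List.infix_cons_iff, List.infix_cons_iff, not_or, not_or]
    exact ⟨by simp, by simp [ht], ih⟩

theorem alt_succ (j : ℕ) : alt (j + 1) = alt j ++ [true, false] := by
  simp [alt, List.replicate_succ']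

theorem alt_prefix_alt {i j : ℕ} (hij : i ≤ j) : alt i <+: alt j := by
  obtain ⟨d, rfl⟩ := Nat.exists_eq_add_of_le hij
  exact ⟨alt d, by simp only [alt, List.replicate_add, List.flatten_append]⟩

theorem stmt14_general (j : ℕ) (ω ω' : List Bool) (k : ℤ)
    (hdec : ω = ω' ++ alt j)
    (havoid : ¬ pat j <:+: ω) :
    ∀ (h m : ℕ), 1 ≤ h → h ≤ j → 2 ≤ m → (m : ℤ) ≤ k →
      ¬ pat j <:+: (ω' ++ alt (h - 1) ++ [true] ++ List.replicate m false ++ alt j) := by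
  rintro h m hh hhj hm - hocc
  obtain ⟨h, rfl⟩ := Nat.exists_eq_add_of_le' hh
  obtain ⟨m, rfl⟩ := Nat.exists_eq_add_of_le' hm
  rcases hocc.infix_append_singleton_or_infix_cons_of_replicate (not_false_false_infix_pat j) with hl | hr
  · have hpre : ω' ++ alt h ++ [true] ++ [false] <+: ω := by
      simpa [hdec, alt_succ] using List.prefix_append_right_inj ω' |>.2 (alt_prefix_alt hhj)
    exact havoid (hl.trans hpre.isInfix)
  · have heq := hr.eq_of_length (by simp [pat, alt])
    obtain ⟨t, ht⟩ := exists_pat_eq_true_cons j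
    simp [ht] at heq

theorem stmt14 (j : ℕ) (hj : 1 ≤ j) (ω ω' : List Bool) (k : ℤ)
    (hdec : ω = ω' ++ alt j)
    (havoid : ¬ pat j <:+: ω)
    (hend : ht ω = k) (hk : 2 ≤ k) :
    ∀ (h m : ℕ), 1 ≤ h → h ≤ j → 2 ≤ m → (m : ℤ) ≤ k →
      ¬ pat j <:+: (ω' ++ alt (h - 1) ++ [true] ++ List.replicate m false ++ alt j) :=
  stmt14_general j ω ω' k hdec havoid
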